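/- Define N(ρ) = −min_{W ∈ 𝒲} tr(ρW). Let U_loc = U_1 ⊗ U_2 ⊗ ⋯ ⊗ U_n be a tensor product of unitary matrices U_a on ℂ^{d_a}. Then N(U_loc ρ U_loc†) = N(ρ) for every state ρ on ℂ^{d_1}⊗⋯⊗ℂ^{d_n}. -/
import Mathlib


open Matrix Finset ComplexOrder

abbrev MatD {n : ℕ} (d : Fin n → ℕ) :=
  Matrix ((a : Fin n) → Fin (d a)) ((a : Fin n) → Fin (d a)) ℂ

/-- The partial transpose with respect to the subset `M` of tensor factors. -/
def ptrans {n : ℕ} (d : Fin n → ℕ) (M : Finset (Fin n)) (X : MatD d) : MatD d :=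
  fun i j => X (fun a => if a ∈ M then j a else i a) (fun a => if a ∈ M then i a else j a)

def IsState {n : ℕ} {d : Fin n → ℕ} (ρ : MatD d) : Prop :=
  ρ.PosSemidef ∧ ρ.trace = 1

/-- The tensor product `A 0 ⊗ A 1 ⊗ ⋯ ⊗ A (n-1)` of local operators. -/
def tensorOpD {n : ℕ} (d : Fin n → ℕ)
    (A : (a : Fin n) → Matrix (Fin (d a)) (Fin (d a)) ℂ) : MatD d :=
  fun i j => ∏ a, A a (i a) (j a)

/-- The feasible set 𝒲. -/
def FeasibleW {n : ℕ} (d : Fin n → ℕ) (W : MatD d) : Prop :=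
  W.IsHermitian ∧
  ∀ M : Finset (Fin n), M.Nonempty → M ≠ Finset.univ →
    ∃ P Q : MatD d, P.PosSemidef ∧ (1 - P).PosSemidef ∧
      Q.PosSemidef ∧ (1 - Q).PosSemidef ∧ W = P + ptrans d M Q

/-- `N(ρ) = − min_{W ∈ 𝒲} tr(ρ W)`. -/
noncomputable def Nval {n : ℕ} (d : Fin n → ℕ) (ρ : MatD d) : ℝ :=
  - sInf {r : ℝ | ∃ W : MatD d, FeasibleW d W ∧ r = ((ρ * W).trace).re}

/-! ### Auxiliary lemmas -/

lemma conjT_transpose_conjT {m : Type*} (A : Matrix m m ℂ) : ((Aᴴ)ᵀ)ᴴ = Aᵀ := by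
  ext i j
  simp [Matrix.conjTranspose_apply]

lemma tensorOpD_mul {n : ℕ} (d : Fin n → ℕ)
    (A B : (a : Fin n) → Matrix (Fin (d a)) (Fin (d a)) ℂ) :
    tensorOpD d A * tensorOpD d B = tensorOpD d (fun a => A a * B a) := by
  ext i j
  simp only [Matrix.mul_apply, tensorOpD]
  simp_rw [← Finset.prod_mul_distrib]
  rw [Finset.prod_univ_sum, Fintype.piFinset_univ]

lemma tensorOpD_one {n : ℕ} (d : Fin n → ℕ) :
    tensorOpD d (fun _ => (1 : Matrix _ _ ℂ)) = 1 := by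
  ext i j
  by_cases h : i = j
  · subst h; simp [tensorOpD, Matrix.one_apply]
  · have : ¬ ∀ a, i a = j a := fun hh => h (funext hh)
    push_neg at this
    obtain ⟨a, ha⟩ := this
    rw [Matrix.one_apply_ne h]
    exact Finset.prod_eq_zero (Finset.mem_univ a) (Matrix.one_apply_ne ha)

lemma tensorOpD_conjTranspose {n : ℕ} (d : Fin n → ℕ)
    (A : (a : Fin n) → Matrix (Fin (d a)) (Fin (d a)) ℂ) :
    (tensorOpD d A)ᴴ = tensorOpD d (fun a => (A a)ᴴ) := by
  ext i j
  simp [tensorOpD, Matrix.conjTranspose_apply, star_prod]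

/-- The swap of indices used in the partial transpose. -/
def swf {n : ℕ} (d : Fin n → ℕ) (M : Finset (Fin n))
    (i j : (a : Fin n) → Fin (d a)) : (a : Fin n) → Fin (d a) :=
  fun a => if a ∈ M then j a else i a

lemma swf_swf {n : ℕ} (d : Fin n → ℕ) (M : Finset (Fin n))
    (i j : (a : Fin n) → Fin (d a)) : swf d M (swf d M i j) (swf d M j i) = i := by
  funext a; by_cases h : a ∈ M <;> simp [swf, h]

lemma sum_sum_swf {n : ℕ} (d : Fin n → ℕ) (M : Finset (Fin n))
    (f : ((a : Fin n) → Fin (d a)) → ((a : Fin n) → Fin (d a)) → ℂ) :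
    ∑ k, ∑ l, f k l = ∑ k, ∑ l, f (swf d M k l) (swf d M l k) := by
  rw [← Fintype.sum_prod_type', ← Fintype.sum_prod_type']
  exact Fintype.sum_equiv
    ⟨fun p => (swf d M p.1 p.2, swf d M p.2 p.1),
      fun p => (swf d M p.1 p.2, swf d M p.2 p.1),
      fun p => Prod.ext (swf_swf d M _ _) (swf_swf d M _ _),
      fun p => Prod.ext (swf_swf d M _ _) (swf_swf d M _ _)⟩
    _ _ (fun p => by simp [swf_swf])

/-- The key lemma: partial transpose of a local conjugation. -/
lemma ptrans_local_mul {n : ℕ} (d : Fin n → ℕ) (M : Finset (Fin n))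
    (A B : (a : Fin n) → Matrix (Fin (d a)) (Fin (d a)) ℂ) (X : MatD d) :
    ptrans d M (tensorOpD d A * X * tensorOpD d B) =
    tensorOpD d (fun a => if a ∈ M then (B a)ᵀ else A a) * ptrans d M X *
      tensorOpD d (fun a => if a ∈ M then (A a)ᵀ else B a) := by
  ext i j
  have hL : (tensorOpD d A * X * tensorOpD d B) (swf d M i j) (swf d M j i)
      = ∑ k, ∑ l, (∏ a, A a (swf d M i j a) (k a)) * X k l *
          (∏ a, B a (l a) (swf d M j i a)) := by
    simp only [Matrix.mul_apply, tensorOpD, Finset.sum_mul, Finset.mul_sum]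
    rw [Finset.sum_comm]
  have hR : (tensorOpD d (fun a => if a ∈ M then (B a)ᵀ else A a) * ptrans d M X *
      tensorOpD d (fun a => if a ∈ M then (A a)ᵀ else B a)) i j
      = ∑ k, ∑ l, (∏ a, (if a ∈ M then (B a)ᵀ else A a) (i a) (k a)) *
          ptrans d M X k l * (∏ a, (if a ∈ M then (A a)ᵀ else B a) (l a) (j a)) := by
    simp only [Matrix.mul_apply, tensorOpD, Finset.sum_mul, Finset.mul_sum]
    rw [Finset.sum_comm]
  show ptrans d M _ i j = _
  rw [ptrans]
  show (tensorOpD d A * X * tensorOpD d B) (swf d M i j) (swf d M j i) = _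
  rw [hL, hR,
    sum_sum_swf d M (fun k l => (∏ a, (if a ∈ M then (B a)ᵀ else A a) (i a) (k a)) *
      ptrans d M X k l * (∏ a, (if a ∈ M then (A a)ᵀ else B a) (l a) (j a)))]
  refine Finset.sum_congr rfl fun k _ => Finset.sum_congr rfl fun l _ => ?_
  have hX : ptrans d M X (swf d M k l) (swf d M l k) = X k l := by
    show X (swf d M (swf d M k l) (swf d M l k)) (swf d M (swf d M l k) (swf d M k l)) = X k l
    rw [swf_swf, swf_swf]
  rw [hX, mul_right_comm, mul_right_comm _ (X k l)]
  congr 1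
  rw [← Finset.prod_mul_distrib, ← Finset.prod_mul_distrib]
  refine Finset.prod_congr rfl fun a _ => ?_
  by_cases h : a ∈ M <;>
    simp [swf, h, Matrix.transpose_apply, mul_comm]

/-- Conjugating a feasible `W` by a local unitary keeps it feasible. -/
lemma feasible_conj {n : ℕ} (d : Fin n → ℕ)
    (U : (a : Fin n) → Matrix (Fin (d a)) (Fin (d a)) ℂ)
    (hU : ∀ a, U a ∈ Matrix.unitaryGroup (Fin (d a)) ℂ)
    (W : MatD d) (hW : FeasibleW d W) :
    FeasibleW d ((tensorOpD d U)ᴴ * W * tensorOpD d U) := by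
  have hUa : ∀ a, (U a)ᴴ * U a = 1 := fun a => by
    have := (hU a).1; rwa [Matrix.star_eq_conjTranspose] at this
  have hUU : (tensorOpD d U)ᴴ * tensorOpD d U = 1 := by
    rw [tensorOpD_conjTranspose, tensorOpD_mul]
    have : (fun a => (U a)ᴴ * U a) = fun _ : Fin n => (1 : Matrix _ _ ℂ) :=
      funext fun a => hUa a
    rw [this, tensorOpD_one]
  constructor
  · show _ = _
    simp only [Matrix.conjTranspose_mul, Matrix.conjTranspose_conjTranspose, hW.1.eq,
      Matrix.mul_assoc]
  · intro M hM hMne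
    obtain ⟨P, Q, hP, hP1, hQ, hQ1, hWPQ⟩ := hW.2 M hM hMne
    -- the partially-conjugated local unitary
    set V : (a : Fin n) → Matrix (Fin (d a)) (Fin (d a)) ℂ :=
      fun a => if a ∈ M then ((U a)ᴴ)ᵀ else U a with hV
    have hVa : ∀ a, (V a)ᴴ * V a = 1 := by
      intro a
      by_cases h : a ∈ M
      · simp only [hV, h, if_true, conjT_transpose_conjT]
        rw [← Matrix.transpose_mul, hUa a, Matrix.transpose_one]
      · simp only [hV, h, if_false]; exact hUa a
    have hVV : (tensorOpD d V)ᴴ * tensorOpD d V = 1 := by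
      rw [tensorOpD_conjTranspose, tensorOpD_mul]
      have : (fun a => (V a)ᴴ * V a) = fun _ : Fin n => (1 : Matrix _ _ ℂ) :=
        funext fun a => hVa a
      rw [this, tensorOpD_one]
    refine ⟨(tensorOpD d U)ᴴ * P * tensorOpD d U, (tensorOpD d V)ᴴ * Q * tensorOpD d V,
      hP.conjTranspose_mul_mul_same _, ?_, hQ.conjTranspose_mul_mul_same _, ?_, ?_⟩
    · have : (1 : MatD d) - (tensorOpD d U)ᴴ * P * tensorOpD d U
          = (tensorOpD d U)ᴴ * (1 - P) * tensorOpD d U := by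
        rw [Matrix.mul_sub, Matrix.sub_mul, Matrix.mul_one, hUU]
      rw [this]
      exact hP1.conjTranspose_mul_mul_same _
    · have : (1 : MatD d) - (tensorOpD d V)ᴴ * Q * tensorOpD d V
          = (tensorOpD d V)ᴴ * (1 - Q) * tensorOpD d V := by
        rw [Matrix.mul_sub, Matrix.sub_mul, Matrix.mul_one, hVV]
      rw [this]
      exact hQ1.conjTranspose_mul_mul_same _
    · have hA : (fun a => if a ∈ M then (V a)ᵀ else (V a)ᴴ) = fun a => (U a)ᴴ := by
        funext a
        by_cases h : a ∈ M
        · simp only [hV, h, if_true, Matrix.transpose_transpose]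
        · simp only [hV, h, if_false]
      have hB : (fun a => if a ∈ M then ((V a)ᴴ)ᵀ else V a) = U := by
        funext a
        by_cases h : a ∈ M
        · simp only [hV, h, if_true, conjT_transpose_conjT, Matrix.transpose_transpose]
        · simp only [hV, h, if_false]
      have hpt : ptrans d M ((tensorOpD d V)ᴴ * Q * tensorOpD d V)
          = (tensorOpD d U)ᴴ * ptrans d M Q * tensorOpD d U := by
        rw [tensorOpD_conjTranspose, ptrans_local_mul]
        have h1 : (fun a => if a ∈ M then (V a)ᵀ else (V a)ᴴ)
            = fun a => (U a)ᴴ := hA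
        have h2 : (fun a => if a ∈ M then ((V a)ᴴ)ᵀ else V a) = U := hB
        rw [h1, h2, ← tensorOpD_conjTranspose]
      rw [hWPQ, hpt, Matrix.mul_add, Matrix.add_mul]

/-- One inclusion of the trace-value sets, under local unitary conjugation. -/
lemma Nset_subset {n : ℕ} (d : Fin n → ℕ)
    (U : (a : Fin n) → Matrix (Fin (d a)) (Fin (d a)) ℂ)
    (hU : ∀ a, U a ∈ Matrix.unitaryGroup (Fin (d a)) ℂ) (ρ : MatD d) :
    {r : ℝ | ∃ W : MatD d, FeasibleW d W ∧
        r = (((tensorOpD d U * ρ * (tensorOpD d U)ᴴ) * W).trace).re} ⊆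
    {r : ℝ | ∃ W : MatD d, FeasibleW d W ∧ r = ((ρ * W).trace).re} := by
  rintro r ⟨W, hW, rfl⟩
  refine ⟨(tensorOpD d U)ᴴ * W * tensorOpD d U, feasible_conj d U hU W hW, ?_⟩
  congr 1
  have : tensorOpD d U * ρ * (tensorOpD d U)ᴴ * W
      = tensorOpD d U * (ρ * ((tensorOpD d U)ᴴ * W)) := by
    simp only [Matrix.mul_assoc]
  rw [this, Matrix.trace_mul_comm]
  simp only [Matrix.mul_assoc]

/-- `N` is invariant under local unitaries `U_loc = U_1 ⊗ ⋯ ⊗ U_n`. -/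
theorem Nval_invariant_under_local_unitaries {n : ℕ} (d : Fin n → ℕ)
    (U : (a : Fin n) → Matrix (Fin (d a)) (Fin (d a)) ℂ)
    (hU : ∀ a, U a ∈ Matrix.unitaryGroup (Fin (d a)) ℂ)
    (ρ : MatD d) (hρ : IsState ρ) :
    Nval d (tensorOpD d U * ρ * (tensorOpD d U)ᴴ) = Nval d ρ := by
  unfold Nval
  congr 1
  apply congrArg
  apply Set.Subset.antisymm
  · exact Nset_subset d U hU ρ
  · have hU' : ∀ a, (U a)ᴴ ∈ Matrix.unitaryGroup (Fin (d a)) ℂ := by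
      intro a
      have := Unitary.star_mem (hU a)
      rwa [Matrix.star_eq_conjTranspose] at this
    have key := Nset_subset d (fun a => (U a)ᴴ) hU'
      (tensorOpD d U * ρ * (tensorOpD d U)ᴴ)
    have hUU : (tensorOpD d U)ᴴ * tensorOpD d U = 1 := by
      rw [tensorOpD_conjTranspose, tensorOpD_mul]
      have : (fun a => (U a)ᴴ * U a) = fun _ : Fin n => (1 : Matrix _ _ ℂ) := by
        funext a
        have := (hU a).1
        rwa [Matrix.star_eq_conjTranspose] at this
      rw [this, tensorOpD_one]
    have hstar : tensorOpD d (fun a => (U a)ᴴ) = (tensorOpD d U)ᴴ :=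
      (tensorOpD_conjTranspose d U).symm
    have hrw : tensorOpD d (fun a => (U a)ᴴ) * (tensorOpD d U * ρ * (tensorOpD d U)ᴴ) *
        (tensorOpD d (fun a => (U a)ᴴ))ᴴ = ρ := by
      rw [hstar, Matrix.conjTranspose_conjTranspose]
      calc (tensorOpD d U)ᴴ * (tensorOpD d U * ρ * (tensorOpD d U)ᴴ) * tensorOpD d U
          = ((tensorOpD d U)ᴴ * tensorOpD d U) * ρ * ((tensorOpD d U)ᴴ * tensorOpD d U) := by
            simp only [Matrix.mul_assoc]
        _ = ρ := by rw [hUU, Matrix.one_mul, Matrix.mul_one]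
    rw [hrw] at key
    exact key
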